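/- Let 3+φ(ℕ) := {n ∈ ℕ | ∃ x ≥ 1 with 3 + φ(x) = n} be the set of values of Euler's totient function shifted by 3. Then M(3+φ(ℕ)) = {4, 5, 7, 9, 11, 13, 21, 23, 31, 33, 61, 63, 81, 83}. -/

import Mathlib

/-- `Subseq x y` means the decimal digit string of `x` is a subsequence of that of `y`. -/
def Subseq (x y : ℕ) : Prop := (Nat.digits 10 x).Sublist (Nat.digits 10 y)

/-- The minimal set of `S`: elements of `S` containing no smaller element of `S`
as a subsequence of their decimal digits. -/
def minimalSet (S : Set ℕ) : Set ℕ := {s ∈ S | ¬ ∃ n ∈ S, n < s ∧ Subseq n s}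

/-!
Since `φ x` is even for `x > 2`, the shifted values `3 + φ x` are `4` and odd numbers `≥ 5`; in
particular the one-digit ones are `4, 5, 7, 9`. A subsequence of a number's digits is never larger
than the number, so a minimal element `s ≥ 10` has no digit among `4, 5, 7, 9`. Its last digit is
odd, hence `1` or `3`, and its leading digit lies in `{1, 2, 3, 6, 8}`; these two digits form one of
ten explicit shifted totient values, which is a subsequence of `s` and therefore equal to `s`.
Conversely the proper subsequences of the fourteen listed numbers are `0` and single digits outside
`{4, 5, 7, 9}`, none of which is a shifted totient value.
-/

open Nat

def threeAddTotient : Set ℕ := {n | ∃ x : ℕ, 1 ≤ x ∧ 3 + φ x = n}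

theorem eq_four_or_odd_of_mem_threeAddTotient {n : ℕ} (hn : n ∈ threeAddTotient) :
    n = 4 ∨ (n % 2 = 1 ∧ 5 ≤ n) := by
  obtain ⟨x, hx, rfl⟩ := hn
  rcases lt_or_ge x 3 with hx3 | hx3
  · interval_cases x <;> decide
  · obtain ⟨k, hk⟩ := totient_even (show 2 < x by omega)
    have := totient_pos.2 (show 0 < x by omega)
    omega

theorem zero_notMem_threeAddTotient : 0 ∉ threeAddTotient := fun h0 ↦ by
  have := eq_four_or_odd_of_mem_threeAddTotient h0
  omega

theorem mem_threeAddTotient_of_mem {n : ℕ}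
    (hn : n ∈ ({4, 5, 7, 9, 11, 13, 21, 23, 31, 33, 61, 63, 81, 83} : Set ℕ)) :
    n ∈ threeAddTotient := by
  simp only [Set.mem_insert_iff, Set.mem_singleton_iff] at hn
  rcases hn with rfl | rfl | rfl | rfl | rfl | rfl | rfl | rfl | rfl | rfl | rfl | rfl | rfl | rfl
  exacts [⟨1, by decide⟩, ⟨3, by decide⟩, ⟨5, by decide⟩, ⟨7, by decide⟩, ⟨16, by decide⟩,
    ⟨11, by decide⟩, ⟨19, by decide⟩, ⟨25, by decide⟩, ⟨29, by decide⟩, ⟨31, by decide⟩,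
    ⟨59, by decide⟩, ⟨61, by decide⟩, ⟨79, by decide⟩, ⟨123, by decide⟩]

namespace Subseq

variable {n m : ℕ}

theorem length_digits_lt (h : Subseq n m) (hnm : n ≠ m) :
    (digits 10 n).length < (digits 10 m).length :=
  lt_of_le_of_ne h.length_le fun hlen ↦ hnm (digits_inj_iff.1 (h.eq_of_length hlen))

theorem le (h : Subseq n m) : n ≤ m := by
  rcases eq_or_ne n m with rfl | hnm
  · rfl
  calc n ≤ 10 ^ (digits 10 n).length := (lt_base_pow_length_digits (by norm_num)).le
    _ ≤ m := (lt_digits_length_iff (by norm_num) m).1 (h.length_digits_lt hnm)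

theorem lt_pow_of_lt {k : ℕ} (h : Subseq n m) (hnm : n < m) (hm : m < 10 ^ (k + 1)) :
    n < 10 ^ k := by
  have hmk := (digits_length_le_iff (by norm_num) m).2 hm
  have := h.length_digits_lt hnm.ne
  exact (digits_length_le_iff (by norm_num) n).1 (by omega)

end Subseq

theorem subseq_of_mem_digits {d m : ℕ} (hd : d ∈ digits 10 m) (hd0 : d ≠ 0) : Subseq d m := by
  rw [Subseq, digits_of_lt 10 d hd0 (digits_lt_base (by norm_num) hd)]
  exact List.singleton_sublist.2 hd

theorem subseq_last_digit_add {a m : ℕ} (ha : a ∈ digits 10 (m / 10)) (ha0 : a ≠ 0) :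
    Subseq (m % 10 + 10 * a) m := by
  have hm : 0 < m := by
    rcases eq_or_ne (m / 10) 0 with h | h
    · simp [h] at ha
    · omega
  rw [Subseq, digits_add 10 (by norm_num) _ _ (mod_lt m (by norm_num)) (.inr ha0),
    digits_of_lt 10 a ha0 (digits_lt_base (by norm_num) ha), digits_def' (by norm_num) hm]
  exact List.cons_sublist_cons.2 (List.singleton_sublist.2 ha)

section minimalSet

variable {S : Set ℕ} {s n : ℕ}

theorem eq_of_subseq_of_mem_minimalSet (hs : s ∈ minimalSet S) (hn : n ∈ S) (h : Subseq n s) :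
    n = s :=
  h.le.eq_of_not_lt fun hlt ↦ hs.2 ⟨n, hn, hlt, h⟩

theorem notMem_of_mem_digits_of_mem_minimalSet (hs : s ∈ minimalSet S) (hn : n ∈ digits 10 s)
    (hn0 : n ≠ 0) (hns : n < s) : n ∉ S :=
  fun hnS ↦ hns.ne (eq_of_subseq_of_mem_minimalSet hs hnS (subseq_of_mem_digits hn hn0))

theorem mem_minimalSet_of_lt_hundred (hS : 0 ∉ S) (hs : s ∈ S) (hs100 : s < 100)
    (hdigits : ∀ d ∈ digits 10 s, d < s → d ∉ S) : s ∈ minimalSet S := by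
  refine ⟨hs, fun ⟨n, hnS, hns, hsub⟩ ↦ hdigits n ?_ hns hnS⟩
  have hn0 : n ≠ 0 := by rintro rfl; exact hS hnS
  have hn10 : n < 10 := by simpa using Subseq.lt_pow_of_lt (k := 1) hsub hns hs100
  rwa [Subseq, digits_of_lt 10 n hn0 hn10, List.singleton_sublist] at hsub

end minimalSet

theorem mem_of_mem_minimalSet_threeAddTotient {s : ℕ} (hs : s ∈ minimalSet threeAddTotient) :
    s ∈ ({4, 5, 7, 9, 11, 13, 21, 23, 31, 33, 61, 63, 81, 83} : Set ℕ) := by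
  simp only [Set.mem_insert_iff, Set.mem_singleton_iff]
  rcases eq_four_or_odd_of_mem_threeAddTotient hs.1 with rfl | ⟨hodd, h5⟩
  · simp
  rcases lt_or_ge s 10 with h10 | h10
  · omega
  have hdigit {d : ℕ} (hd : d ∈ digits 10 s) (hd0 : d ≠ 0) :
      d ≠ 4 ∧ d ≠ 5 ∧ d ≠ 7 ∧ d ≠ 9 := by
    have hd10 := digits_lt_base (by norm_num) hd
    have := notMem_of_mem_digits_of_mem_minimalSet hs hd hd0 (by omega)
    refine ⟨?_, ?_, ?_, ?_⟩ <;> rintro rfl <;> exact this (mem_threeAddTotient_of_mem (by simp))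
  have hdigits_s : digits 10 s = s % 10 :: digits 10 (s / 10) :=
    digits_def' (by norm_num) (by omega)
  have hs10 : s / 10 ≠ 0 := by omega
  obtain ⟨a, ha, ha0⟩ : ∃ a ∈ digits 10 (s / 10), a ≠ 0 :=
    ⟨_, List.getLast_mem _, getLast_digit_ne_zero 10 hs10⟩
  have ha10 : a < 10 := digits_lt_base (by norm_num) ha
  have := hdigit (hdigits_s ▸ List.mem_cons_self) (by omega)
  have := hdigit (hdigits_s ▸ List.mem_cons_of_mem _ ha) ha0
  have hmem : s % 10 + 10 * a ∈ threeAddTotient := mem_threeAddTotient_of_mem (by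
    simp only [Set.mem_insert_iff, Set.mem_singleton_iff]; omega)
  have := eq_of_subseq_of_mem_minimalSet hs hmem (subseq_last_digit_add ha ha0)
  omega

theorem minimalSet_three_add_totient_values :
    minimalSet {n : ℕ | ∃ x : ℕ, 1 ≤ x ∧ 3 + Nat.totient x = n} =
      {4, 5, 7, 9, 11, 13, 21, 23, 31, 33, 61, 63, 81, 83} := by
  show minimalSet threeAddTotient = _
  refine Set.Subset.antisymm (fun s ↦ mem_of_mem_minimalSet_threeAddTotient) fun s hs ↦ ?_
  have hs100 : s < 100 := by simp only [Set.mem_insert_iff, Set.mem_singleton_iff] at hs; omega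
  refine mem_minimalSet_of_lt_hundred zero_notMem_threeAddTotient (mem_threeAddTotient_of_mem hs)
    hs100 fun d hd hds hdT ↦ ?_
  have := eq_four_or_odd_of_mem_threeAddTotient hdT
  simp only [Set.mem_insert_iff, Set.mem_singleton_iff] at hs
  rcases hs with rfl | rfl | rfl | rfl | rfl | rfl | rfl | rfl | rfl | rfl | rfl | rfl | rfl | rfl
    <;> norm_num at hd <;> omega
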